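/- arXiv:2303.11937 — 3 statements merged into one kernel-verified Lean document; each statement's English description precedes it below -/
import Mathlib

section
/- Consider projected stochastic gradient ascent on a function F over a convex set C: x_{t+1} = P_C(x_t + η_t g_t) with step size η_t = 2/√t, where P_C is the Euclidean projection onto C. Assume: (i) C has diameter at most D; (ii) F is L-smooth and its gradient norm on C is bounded by L; (iii) the stochastic gradients g_t satisfy E[g_t | F_{t-1}] = ∇F(x_t) and ‖g_t − ∇F(x_t)‖ ≤ M almost surely; (iv) F satisfies F(y) − 2F(x) ≤ ⟨∇F(x), y − x⟩ for all x, y ∈ C (a consequence of monotone DR-submodularity). Let OPT = max_{x∈C} F(x). Then for any δ ∈ (0,1], with probability at least 1 − δ, the average of the iterate values satisfies (1/T)·Σ_{t=1}^T F(x_t) ≥ (1/2)·OPT − C̃/√T − D·M·√(log(1/δ)/(2T)), where C̃ = (8(L+M)² + D²)/8. -/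
/-
Along every sample path, the regret analysis of projected gradient ascent with steps `2 / √t`,
combined with `F x* - 2 F xₜ ≤ ⟪∇F xₜ, x* - xₜ⟫`, bounds `T · OPT - 2 ∑ₜ F xₜ` by
`(D² / 4 + 2 (L + M)²) √T` plus the noise sum `∑ₜ ⟪∇F xₜ - gₜ, x* - xₜ⟫`. The noise terms are
martingale differences bounded by `D M`, so by the Azuma–Hoeffding inequality their sum exceeds
`D M √(2 T log (1 / δ))` with probability at most `δ`.
-/

open MeasureTheory Real Finset ProbabilityTheory
open scoped NNReal

theorem sum_Icc_one_div_sqrt_le (T : ℕ) : ∑ t ∈ Icc 1 T, 1 / √(t : ℝ) ≤ 2 * √(T : ℝ) := by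
  induction T with
  | zero => simp
  | succ T ih =>
    rw [sum_Icc_succ_top (by omega)]
    have hpos : 0 < √((T + 1 : ℕ) : ℝ) := sqrt_pos.2 (by positivity)
    have hmono : √(T : ℝ) ≤ √((T + 1 : ℕ) : ℝ) := sqrt_le_sqrt (by push_cast; linarith)
    have hsq : √((T + 1 : ℕ) : ℝ) ^ 2 - √(T : ℝ) ^ 2 = 1 := by
      rw [sq_sqrt (by positivity), sq_sqrt (by positivity)]; push_cast; ring
    have hstep : 1 / √((T + 1 : ℕ) : ℝ) ≤ 2 * √((T + 1 : ℕ) : ℝ) - 2 * √(T : ℝ) := by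
      rw [div_le_iff₀ hpos]; nlinarith
    linarith

theorem sum_Icc_sqrt_mul_sub_add_le {a : ℕ → ℝ} {b : ℝ} (ha : ∀ t, a t ≤ b) (T : ℕ) :
    ∑ t ∈ Icc 1 T, √(t : ℝ) * (a t - a (t + 1)) + √(T : ℝ) * a (T + 1) ≤ b * √(T : ℝ) := by
  induction T with
  | zero => simp
  | succ T ih =>
    rw [sum_Icc_succ_top (by omega)]
    have hmono : √(T : ℝ) ≤ √((T + 1 : ℕ) : ℝ) := sqrt_le_sqrt (by push_cast; linarith)
    nlinarith [mul_le_mul_of_nonneg_left (ha (T + 1)) (sub_nonneg.2 hmono)]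

section ProjectedAscent

variable {E : Type*} [NormedAddCommGroup E] [InnerProductSpace ℝ E]

theorem two_mul_inner_le_of_norm_sub_le {x x' g c : E} {η : ℝ} (hη : 0 ≤ η)
    (h : ‖x' - c‖ ≤ ‖x + η • g - c‖) :
    2 * η * inner ℝ g (c - x) ≤ ‖x - c‖ ^ 2 - ‖x' - c‖ ^ 2 + η ^ 2 * ‖g‖ ^ 2 := by
  have hexpand : ‖x + η • g - c‖ ^ 2 = ‖x - c‖ ^ 2 - 2 * η * inner ℝ g (c - x) + η ^ 2 * ‖g‖ ^ 2 := by
    have hflip : inner ℝ (x - c) g = -inner ℝ g (c - x) := by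
      rw [real_inner_comm, ← inner_neg_right, neg_sub]
    rw [show x + η • g - c = (x - c) + η • g by abel, norm_add_sq_real, real_inner_smul_right,
      norm_smul, Real.norm_of_nonneg hη, hflip]
    ring
  nlinarith [pow_le_pow_left₀ (norm_nonneg _) h 2]

theorem inner_le_of_projected_step {x x' g c : E} {t : ℕ} (ht : 1 ≤ t)
    (h : ‖x' - c‖ ≤ ‖x + (2 / √(t : ℝ)) • g - c‖) :
    inner ℝ g (c - x) ≤ √(t : ℝ) / 4 * (‖x - c‖ ^ 2 - ‖x' - c‖ ^ 2) + 1 / √(t : ℝ) * ‖g‖ ^ 2 := by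
  have hs : 0 < √(t : ℝ) := sqrt_pos.2 (by exact_mod_cast ht)
  calc inner ℝ g (c - x) = √(t : ℝ) / 4 * (2 * (2 / √(t : ℝ)) * inner ℝ g (c - x)) := by
        field_simp; ring
    _ ≤ √(t : ℝ) / 4 * (‖x - c‖ ^ 2 - ‖x' - c‖ ^ 2 + (2 / √(t : ℝ)) ^ 2 * ‖g‖ ^ 2) := by
        gcongr
        exact two_mul_inner_le_of_norm_sub_le (by positivity) h
    _ = √(t : ℝ) / 4 * (‖x - c‖ ^ 2 - ‖x' - c‖ ^ 2) + 1 / √(t : ℝ) * ‖g‖ ^ 2 := by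
        field_simp; ring

theorem sum_inner_le_of_projected_ascent {P : E → E} {x g : ℕ → E} {c : E} {D G : ℝ} {T : ℕ}
    (hP : ∀ y, ‖P y - c‖ ≤ ‖y - c‖)
    (hx : ∀ t, 1 ≤ t → x (t + 1) = P (x t + (2 / √(t : ℝ)) • g t))
    (hxD : ∀ t, ‖x t - c‖ ≤ D) (hg : ∀ t ∈ Icc 1 T, ‖g t‖ ≤ G) :
    ∑ t ∈ Icc 1 T, inner ℝ (g t) (c - x t) ≤ (D ^ 2 / 4 + 2 * G ^ 2) * √(T : ℝ) := by
  have hstep : ∀ t ∈ Icc 1 T, inner ℝ (g t) (c - x t) ≤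
      (√(t : ℝ) * (‖x t - c‖ ^ 2 - ‖x (t + 1) - c‖ ^ 2)) / 4 + 1 / √(t : ℝ) * G ^ 2 := by
    intro t ht
    have ht1 := (mem_Icc.1 ht).1
    have hG : 1 / √(t : ℝ) * ‖g t‖ ^ 2 ≤ 1 / √(t : ℝ) * G ^ 2 := by gcongr; exact hg t ht
    linarith [inner_le_of_projected_step ht1 ((hx t ht1).symm ▸ hP _)]
  have hsqrt := sum_Icc_sqrt_mul_sub_add_le (a := fun t => ‖x t - c‖ ^ 2) (b := D ^ 2)
    (fun t => pow_le_pow_left₀ (norm_nonneg _) (hxD t) 2) T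
  have hinv := sum_Icc_one_div_sqrt_le T
  calc ∑ t ∈ Icc 1 T, inner ℝ (g t) (c - x t)
      ≤ ∑ t ∈ Icc 1 T, ((√(t : ℝ) * (‖x t - c‖ ^ 2 - ‖x (t + 1) - c‖ ^ 2)) / 4
          + 1 / √(t : ℝ) * G ^ 2) := sum_le_sum hstep
    _ = (∑ t ∈ Icc 1 T, √(t : ℝ) * (‖x t - c‖ ^ 2 - ‖x (t + 1) - c‖ ^ 2)) / 4
          + (∑ t ∈ Icc 1 T, 1 / √(t : ℝ)) * G ^ 2 := by
      rw [sum_add_distrib, sum_div, sum_mul]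
    _ ≤ (D ^ 2 / 4 + 2 * G ^ 2) * √(T : ℝ) := by
      have hlast : 0 ≤ √(T : ℝ) * ‖x (T + 1) - c‖ ^ 2 := by positivity
      nlinarith [sq_nonneg G]

theorem mul_sub_two_mul_sum_le_of_projected_ascent {K : Set E} {F : E → ℝ} {grad P : E → E}
    {x g : ℕ → E} {c : E} {D L M : ℝ} {T : ℕ} (hc : c ∈ K) (hxK : ∀ t, x t ∈ K)
    (hdiam : ∀ y ∈ K, ∀ z ∈ K, ‖y - z‖ ≤ D) (hgradL : ∀ y ∈ K, ‖grad y‖ ≤ L)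
    (hF : ∀ y ∈ K, F c - 2 * F y ≤ inner ℝ (grad y) (c - y))
    (hP : ∀ y, ‖P y - c‖ ≤ ‖y - c‖)
    (hx : ∀ t, 1 ≤ t → x (t + 1) = P (x t + (2 / √(t : ℝ)) • g t))
    (hnoise : ∀ t ∈ Icc 1 T, ‖g t - grad (x t)‖ ≤ M) :
    T * F c - 2 * ∑ t ∈ Icc 1 T, F (x t) ≤ (D ^ 2 / 4 + 2 * (L + M) ^ 2) * √(T : ℝ)
      + ∑ t ∈ Icc 1 T, inner ℝ (grad (x t) - g t) (c - x t) := by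
  have hg (t : ℕ) (ht : t ∈ Icc 1 T) : ‖g t‖ ≤ L + M :=
    calc ‖g t‖ ≤ ‖grad (x t)‖ + ‖g t - grad (x t)‖ := norm_le_insert' _ _
      _ ≤ L + M := add_le_add (hgradL _ (hxK t)) (hnoise t ht)
  have hregret := sum_inner_le_of_projected_ascent hP hx (fun t => hdiam _ (hxK t) _ hc) hg
  have hstep (t : ℕ) (_ : t ∈ Icc 1 T) : F c - 2 * F (x t) ≤
      inner ℝ (g t) (c - x t) + inner ℝ (grad (x t) - g t) (c - x t) := by
    rw [← inner_add_left, add_sub_cancel]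
    exact hF _ (hxK t)
  calc (T : ℝ) * F c - 2 * ∑ t ∈ Icc 1 T, F (x t) = ∑ t ∈ Icc 1 T, (F c - 2 * F (x t)) := by
        rw [sum_sub_distrib, sum_const, Nat.card_Icc, nsmul_eq_mul, mul_sum]; simp
    _ ≤ ∑ t ∈ Icc 1 T, (inner ℝ (g t) (c - x t) + inner ℝ (grad (x t) - g t) (c - x t)) :=
        sum_le_sum hstep
    _ ≤ _ := by rw [sum_add_distrib]; linarith

end ProjectedAscent

section Hoeffding

theorem exp_mul_le_cosh_add_sinh {z c : ℝ} (hz : |z| ≤ c) (s : ℝ) :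
    exp (s * z) ≤ cosh (s * c) + z / c * sinh (s * c) := by
  rcases (abs_nonneg z).trans hz |>.eq_or_lt with rfl | hc
  · simp [abs_nonpos_iff.1 hz]
  obtain ⟨hzl, hzr⟩ := abs_le.1 hz
  -- `s * z` is the convex combination of `∓ s * c` with weights `(c ∓ z) / (2 * c)`
  have hconv := convexOn_exp.2 (Set.mem_univ (-(s * c))) (Set.mem_univ (s * c))
    (div_nonneg (by linarith) (by positivity) : 0 ≤ (c - z) / (2 * c))
    (div_nonneg (by linarith) (by positivity) : 0 ≤ (c + z) / (2 * c)) (by field_simp; ring)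
  have hcomb : (c - z) / (2 * c) * -(s * c) + (c + z) / (2 * c) * (s * c) = s * z := by
    field_simp; ring
  have hvalue : (c - z) / (2 * c) * exp (-(s * c)) + (c + z) / (2 * c) * exp (s * c) =
      cosh (s * c) + z / c * sinh (s * c) := by
    rw [cosh_eq, sinh_eq]; field_simp; ring
  simp only [smul_eq_mul] at hconv
  rwa [hcomb, hvalue] at hconv

variable {Ω : Type*} {m mΩ : MeasurableSpace Ω} {μ : Measure Ω}

theorem condExp_exp_mul_le_of_abs_le [IsFiniteMeasure μ] (hm : m ≤ mΩ) {Z : Ω → ℝ} {c : ℝ}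
    (hZ : AEStronglyMeasurable Z μ) (hbd : ∀ᵐ ω ∂μ, |Z ω| ≤ c) (hmean : μ[Z|m] =ᵐ[μ] 0) (s : ℝ) :
    μ[fun ω => exp (s * Z ω)|m] ≤ᵐ[μ] fun _ => exp (c ^ 2 * s ^ 2 / 2) := by
  have hZint : Integrable Z μ := Integrable.of_bound hZ c (by simpa only [norm_eq_abs] using hbd)
  have hexp : Integrable (fun ω => exp (s * Z ω)) μ :=
    integrable_exp_mul_of_mem_Icc hZ.aemeasurable (hbd.mono fun ω h => abs_le.1 h)
  have hlin : μ[(fun _ => cosh (s * c)) + (sinh (s * c) / c) • Z|m] =ᵐ[μ] fun _ => cosh (s * c) := by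
    filter_upwards [condExp_add (integrable_const _) (hZint.smul (sinh (s * c) / c)) m,
      condExp_smul (μ := μ) (sinh (s * c) / c) Z m, hmean] with ω hadd hsmul hzero
    rw [hadd, Pi.add_apply, condExp_const hm, hsmul, Pi.smul_apply, hzero]
    simp
  have hmono := condExp_mono (m := m) hexp
    ((integrable_const (cosh (s * c))).add (hZint.smul (sinh (s * c) / c)))
    (hbd.mono fun ω h => (exp_mul_le_cosh_add_sinh h s).trans_eq
      (by simp only [Pi.add_apply, Pi.smul_apply, smul_eq_mul]; ring))
  filter_upwards [hmono, hlin] with ω h1 h2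
  calc μ[fun ω => exp (s * Z ω)|m] ω ≤ cosh (s * c) := h1.trans_eq h2
    _ ≤ exp ((s * c) ^ 2 / 2) := cosh_le_exp_half_sq _
    _ = exp (c ^ 2 * s ^ 2 / 2) := by ring_nf

theorem ProbabilityTheory.HasSubgaussianMGF.add_of_condExp_eq_zero [IsFiniteMeasure μ]
    (hm : m ≤ mΩ) {X Y : Ω → ℝ} {a c : ℝ≥0} (hX : HasSubgaussianMGF X a μ)
    (hXm : StronglyMeasurable[m] X) (hY : AEStronglyMeasurable Y μ) (hbd : ∀ᵐ ω ∂μ, |Y ω| ≤ c)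
    (hmean : μ[Y|m] =ᵐ[μ] 0) :
    HasSubgaussianMGF (X + Y) (a + c ^ 2) μ := by
  have hexpY (s : ℝ) : Integrable (fun ω => exp (s * Y ω)) μ :=
    integrable_exp_mul_of_mem_Icc hY.aemeasurable (hbd.mono fun ω h => abs_le.1 h)
  have hexpXm (s : ℝ) : StronglyMeasurable[m] (fun ω => exp (s * X ω)) :=
    continuous_exp.comp_stronglyMeasurable (hXm.const_mul s)
  have hprod (s : ℝ) : Integrable ((fun ω => exp (s * X ω)) * fun ω => exp (s * Y ω)) μ :=
    (hX.integrable_exp_mul s).mul_bdd (hexpY s).1 (c := exp (|s| * c)) <| hbd.mono fun ω h => by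
      rw [norm_eq_abs, abs_exp, exp_le_exp]
      exact (le_abs_self _).trans ((abs_mul s (Y ω)).trans_le (by gcongr))
  have hsplit (s : ℝ) : (fun ω => exp (s * (X + Y) ω)) =
      (fun ω => exp (s * X ω)) * fun ω => exp (s * Y ω) := by
    funext ω; simp only [Pi.add_apply, Pi.mul_apply, mul_add, exp_add]
  refine ⟨fun s => hsplit s ▸ hprod s, fun s => ?_⟩
  have hpull := condExp_mul_of_stronglyMeasurable_left (hexpXm s) (hprod s) (hexpY s)
  have hYexp := condExp_exp_mul_le_of_abs_le hm hY hbd hmean s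
  calc mgf (X + Y) μ s = ∫ ω, μ[(fun ω => exp (s * X ω)) * fun ω => exp (s * Y ω)|m] ω ∂μ := by
        rw [integral_condExp hm, ← hsplit]; rfl
    _ ≤ ∫ ω, exp (s * X ω) * exp (c ^ 2 * s ^ 2 / 2) ∂μ := by
        refine integral_mono_ae integrable_condExp ((hX.integrable_exp_mul s).mul_const _) ?_
        filter_upwards [hpull, hYexp] with ω h1 h2
        rw [h1, Pi.mul_apply]
        gcongr
    _ = mgf X μ s * exp (c ^ 2 * s ^ 2 / 2) := integral_mul_const _ _
    _ ≤ exp (a * s ^ 2 / 2) * exp (c ^ 2 * s ^ 2 / 2) := by gcongr; exact hX.mgf_le s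
    _ = exp (↑(a + c ^ 2) * s ^ 2 / 2) := by rw [← exp_add]; push_cast; ring_nf

theorem hasSubgaussianMGF_sum_Icc_of_condExp_eq_zero [IsProbabilityMeasure μ]
    (ℱ : Filtration ℕ mΩ) {Z : ℕ → Ω → ℝ} {c : ℝ≥0}
    (hmeas : ∀ t, 1 ≤ t → StronglyMeasurable[ℱ t] (Z t))
    (hbd : ∀ t, 1 ≤ t → ∀ᵐ ω ∂μ, |Z t ω| ≤ c)
    (hmean : ∀ t, 1 ≤ t → μ[Z t|ℱ (t - 1)] =ᵐ[μ] 0) (T : ℕ) :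
    HasSubgaussianMGF (fun ω => ∑ t ∈ Icc 1 T, Z t ω) (T * c ^ 2) μ := by
  induction T with
  | zero => simp
  | succ T ih =>
    have hsum : (fun ω => ∑ t ∈ Icc 1 (T + 1), Z t ω) =
        (fun ω => ∑ t ∈ Icc 1 T, Z t ω) + Z (T + 1) := by
      funext ω; rw [sum_Icc_succ_top (by omega), Pi.add_apply]
    have hSm : StronglyMeasurable[ℱ T] fun ω => ∑ t ∈ Icc 1 T, Z t ω :=
      Finset.stronglyMeasurable_fun_sum _ fun t ht =>
        (hmeas t (mem_Icc.1 ht).1).mono (ℱ.mono (mem_Icc.1 ht).2)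
    rw [hsum, Nat.cast_succ, add_one_mul]
    exact ih.add_of_condExp_eq_zero (ℱ.le T) hSm
      ((hmeas _ T.succ_pos).mono (ℱ.le _)).aestronglyMeasurable (hbd _ T.succ_pos)
      (hmean _ T.succ_pos)

theorem ProbabilityTheory.HasSubgaussianMGF.measure_sqrt_lt_le [IsFiniteMeasure μ] {X : Ω → ℝ}
    {c : ℝ≥0} (h : HasSubgaussianMGF X c μ) {δ : ℝ} (hδ0 : 0 < δ) (hδ1 : δ ≤ 1) :
    μ {ω | √(2 * c * log (1 / δ)) < X ω} ≤ ENNReal.ofReal δ := by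
  rcases eq_zero_or_pos c with rfl | hc
  · refine (measure_eq_zero_iff_ae_notMem.2 ?_).trans_le (by positivity)
    filter_upwards [h.ae_eq_zero_of_hasSubgaussianMGF_zero] with ω hω
    simp [hω]
  have hlog : 0 ≤ log (1 / δ) := log_nonneg (by rw [le_div_iff₀ hδ0]; linarith)
  have hδexp : exp (-log (1 / δ)) = δ := by rw [exp_neg, exp_log (by positivity), one_div, inv_inv]
  have htail := h.measure_ge_le (sqrt_nonneg (2 * c * log (1 / δ)))
  rw [sq_sqrt (by positivity), show -(2 * c * log (1 / δ)) / (2 * c) = -log (1 / δ) by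
    field_simp, hδexp] at htail
  calc μ {ω | √(2 * c * log (1 / δ)) < X ω} ≤ μ {ω | √(2 * c * log (1 / δ)) ≤ X ω} :=
        measure_mono (Set.ofPred_subset_ofPred.2 fun ω => le_of_lt)
    _ ≤ ENNReal.ofReal δ := by
        rw [← ENNReal.ofReal_toReal (measure_ne_top μ _)]
        exact ENNReal.ofReal_le_ofReal htail

end Hoeffding

section GradientNoise

variable {Ω : Type*} {mΩ : MeasurableSpace Ω} {μ : Measure Ω}
  {E : Type*} [NormedAddCommGroup E] [InnerProductSpace ℝ E] [CompleteSpace E]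

theorem condExp_inner_eq_zero_of_condExp_eq_zero {m : MeasurableSpace Ω} {Y v : Ω → E}
    (hv : StronglyMeasurable[m] v) (hY : Integrable Y μ)
    (hint : Integrable (fun ω => inner ℝ (Y ω) (v ω)) μ) (hmean : μ[Y|m] =ᵐ[μ] 0) :
    μ[fun ω => inner ℝ (Y ω) (v ω)|m] =ᵐ[μ] 0 := by
  have hpull : μ[fun ω => inner ℝ (Y ω) (v ω)|m] =ᵐ[μ] fun ω => inner ℝ (μ[Y|m] ω) (v ω) :=
    condExp_bilin_of_stronglyMeasurable_right (innerSL ℝ) hv hint hY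
  filter_upwards [hpull, hmean] with ω hpull hzero
  rw [hpull, hzero, Pi.zero_apply, Pi.zero_apply, inner_zero_left]

theorem hasSubgaussianMGF_sum_inner_gradient_noise [IsProbabilityMeasure μ]
    (ℱ : Filtration ℕ mΩ) {grad : E → E} (hgrad : Continuous grad) {x g : ℕ → Ω → E} {c : E}
    {D L M : ℝ} (hx : ∀ t, 1 ≤ t → StronglyMeasurable[ℱ (t - 1)] (x t))
    (hg : ∀ t, 1 ≤ t → StronglyMeasurable[ℱ t] (g t))
    (hcond : ∀ t, 1 ≤ t → μ[g t|ℱ (t - 1)] =ᵐ[μ] fun ω => grad (x t ω))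
    (hnoise : ∀ t, 1 ≤ t → ∀ᵐ ω ∂μ, ‖g t ω - grad (x t ω)‖ ≤ M)
    (hgradL : ∀ t ω, ‖grad (x t ω)‖ ≤ L) (hxD : ∀ t ω, ‖c - x t ω‖ ≤ D) (T : ℕ) :
    HasSubgaussianMGF (fun ω => ∑ t ∈ Icc 1 T, inner ℝ (grad (x t ω) - g t ω) (c - x t ω))
      (T * (D * M).toNNReal ^ 2) μ := by
  have hgradx (t : ℕ) (ht : 1 ≤ t) : StronglyMeasurable[ℱ (t - 1)] fun ω => grad (x t ω) :=
    hgrad.comp_stronglyMeasurable (hx t ht)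
  have hmeas (t : ℕ) (ht : 1 ≤ t) :
      StronglyMeasurable[ℱ t] fun ω => inner ℝ (grad (x t ω) - g t ω) (c - x t ω) :=
    (((hgradx t ht).mono (ℱ.mono (t.sub_le 1))).sub (hg t ht)).inner
      (stronglyMeasurable_const.sub ((hx t ht).mono (ℱ.mono (t.sub_le 1))))
  have hbd (t : ℕ) (ht : 1 ≤ t) :
      ∀ᵐ ω ∂μ, |inner ℝ (grad (x t ω) - g t ω) (c - x t ω)| ≤ (D * M).toNNReal := by
    filter_upwards [hnoise t ht] with ω hω
    calc |inner ℝ (grad (x t ω) - g t ω) (c - x t ω)|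
        ≤ ‖grad (x t ω) - g t ω‖ * ‖c - x t ω‖ := abs_real_inner_le_norm _ _
      _ ≤ M * D := by
        rw [norm_sub_rev]
        exact mul_le_mul hω (hxD t ω) (norm_nonneg _) ((norm_nonneg _).trans hω)
      _ ≤ (D * M).toNNReal := (mul_comm M D).trans_le (Real.le_coe_toNNReal _)
  refine hasSubgaussianMGF_sum_Icc_of_condExp_eq_zero ℱ hmeas hbd (fun t ht => ?_) T
  have hgradint : Integrable (fun ω => grad (x t ω)) μ :=
    .of_bound ((hgradx t ht).mono (ℱ.le _)).aestronglyMeasurable L (ae_of_all _ (hgradL t))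
  have hYint : Integrable ((fun ω => grad (x t ω)) - g t) μ :=
    .of_bound (((hgradx t ht).mono (ℱ.le _)).sub ((hg t ht).mono (ℱ.le t))).aestronglyMeasurable M
      ((hnoise t ht).mono fun ω h => by rwa [Pi.sub_apply, norm_sub_rev])
  have hgint : Integrable (g t) μ := by simpa using hgradint.sub hYint
  have hYmean : μ[(fun ω => grad (x t ω)) - g t|ℱ (t - 1)] =ᵐ[μ] 0 := by
    filter_upwards [condExp_sub hgradint hgint (ℱ (t - 1)), hcond t ht] with ω hsub hgω
    rw [hsub, Pi.sub_apply, condExp_of_stronglyMeasurable (ℱ.le _) (hgradx t ht) hgradint, hgω,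
      sub_self, Pi.zero_apply]
  exact condExp_inner_eq_zero_of_condExp_eq_zero
    (stronglyMeasurable_const.sub (hx t ht)) hYint
    (.of_bound ((hmeas t ht).mono (ℱ.le t)).aestronglyMeasurable _
      ((hbd t ht).mono fun ω h => by rwa [norm_eq_abs]))
    hYmean

end GradientNoise

theorem le_one_div_mul_of_mul_sub_two_mul_le {T S OPT A c ℓ : ℝ} (hT : 0 < T) (hc : 0 ≤ c)
    (h : T * OPT - 2 * S ≤ A * √T + √(2 * (T * c ^ 2) * ℓ)) :
    1 / 2 * OPT - A / 2 / √T - c * √(ℓ / (2 * T)) ≤ 1 / T * S := by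
  have hsqrt : √(2 * (T * c ^ 2) * ℓ) = 2 * T * (c * √(ℓ / (2 * T))) := by
    rw [show 2 * (T * c ^ 2) * ℓ = c ^ 2 * ((2 * T) ^ 2 * (ℓ / (2 * T))) by field_simp,
      sqrt_mul (sq_nonneg _), sqrt_mul (sq_nonneg _), sqrt_sq hc, sqrt_sq (by positivity)]
    ring
  have hlin : A * √T = 2 * T * (A / 2 / √T) := by
    have hsT := sqrt_pos.2 hT
    field_simp
    rw [sq_sqrt hT.le]
  rw [hsqrt, hlin] at h
  rw [show 1 / T * S = S / T by ring, le_div_iff₀ hT]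
  linarith

theorem pga_high_prob_bound_general
    {n : ℕ} {Ω : Type*} {mΩ : MeasurableSpace Ω}
    (μ : Measure Ω) [IsProbabilityMeasure μ]
    (ℱ : Filtration ℕ mΩ)
    (C : Set (EuclideanSpace ℝ (Fin n)))
    (F : EuclideanSpace ℝ (Fin n) → ℝ)
    (gradF : EuclideanSpace ℝ (Fin n) → EuclideanSpace ℝ (Fin n))
    (D L M : ℝ)
    (hdiam : ∀ x ∈ C, ∀ y ∈ C, ‖x - y‖ ≤ D)
    (hsmooth : ∀ x y, ‖gradF x - gradF y‖ ≤ L * ‖x - y‖)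
    (hgradBound : ∀ x ∈ C, ‖gradF x‖ ≤ L)
    (hDR : ∀ x ∈ C, ∀ y ∈ C, F y - 2 * F x ≤ (inner ℝ (gradF x) (y - x) : ℝ))
    (projC : EuclideanSpace ℝ (Fin n) → EuclideanSpace ℝ (Fin n))
    (hprojDist : ∀ y, ∀ c ∈ C, ‖projC y - c‖ ≤ ‖y - c‖)
    (T : ℕ) (hT : 1 ≤ T)
    (x g : ℕ → Ω → EuclideanSpace ℝ (Fin n))
    (hxC : ∀ t ω, x t ω ∈ C)
    (hxAdapted : ∀ t, 1 ≤ t → StronglyMeasurable[ℱ (t - 1)] (x t))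
    (hgAdapted : ∀ t, 1 ≤ t → StronglyMeasurable[ℱ t] (g t))
    (hupdate : ∀ t, 1 ≤ t → ∀ ω,
      x (t + 1) ω = projC (x t ω + (2 / Real.sqrt (t : ℝ)) • g t ω))
    (hcond : ∀ t, 1 ≤ t → μ[g t | ℱ (t - 1)] =ᵐ[μ] fun ω => gradF (x t ω))
    (hnoise : ∀ t, 1 ≤ t → ∀ᵐ ω ∂μ, ‖g t ω - gradF (x t ω)‖ ≤ M)
    (OPT : ℝ) (hOPT : IsGreatest (F '' C) OPT)
    (δ : ℝ) (hδ : δ ∈ Set.Ioc (0 : ℝ) 1) :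
    μ {ω | (1 / (T : ℝ)) * ∑ t ∈ Finset.Icc 1 T, F (x t ω) ≥
        (1 / 2) * OPT - ((8 * (L + M) ^ 2 + D ^ 2) / 8) / Real.sqrt (T : ℝ)
          - D * M * Real.sqrt (Real.log (1 / δ) / (2 * (T : ℝ)))} ≥
      ENNReal.ofReal (1 - δ) := by
  obtain ⟨xs, hxs, rfl⟩ := hOPT.1
  have hD : 0 ≤ D := (norm_nonneg _).trans (hdiam xs hxs xs hxs)
  have hM : 0 ≤ M := (norm_nonneg _).trans (hnoise 1 le_rfl).exists.choose_spec
  have hgradCont : Continuous gradF :=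
    (LipschitzWith.of_dist_le' fun y z => by simpa only [dist_eq_norm] using hsmooth y z).continuous
  have hsubG := hasSubgaussianMGF_sum_inner_gradient_noise ℱ hgradCont hxAdapted hgAdapted hcond
    hnoise (fun t ω => hgradBound _ (hxC t ω)) (fun t ω => hdiam _ hxs _ (hxC t ω)) T
  have hbad := hsubG.measure_sqrt_lt_le hδ.1 hδ.2
  push_cast [Real.coe_toNNReal _ (mul_nonneg hD hM)] at hbad
  set noise := fun ω => ∑ t ∈ Finset.Icc 1 T, inner ℝ (gradF (x t ω) - g t ω) (xs - x t ω)
  set ε := √(2 * (T * (D * M) ^ 2) * log (1 / δ))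
  calc ENNReal.ofReal (1 - δ) ≤ 1 - μ {ω | ε < noise ω} := by
        rw [ENNReal.ofReal_sub _ hδ.1.le, ENNReal.ofReal_one]
        exact tsub_le_tsub_left hbad 1
    _ = μ {ω | ε < noise ω}ᶜ :=
        (prob_compl_eq_one_sub₀ (nullMeasurableSet_lt aemeasurable_const hsubG.aemeasurable)).symm
    _ ≤ _ := measure_mono_ae ?_
  filter_upwards [(Filter.eventually_all_finset _).2 fun t ht => hnoise t (Finset.mem_Icc.1 ht).1]
    with ω hω hle
  show _ ≥ _
  have hpath := mul_sub_two_mul_sum_le_of_projected_ascent hxs (fun t => hxC t ω) hdiam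
    hgradBound (fun y hy => hDR y hy xs hxs) (hprojDist · xs hxs) (fun t ht => hupdate t ht ω) hω
  convert le_one_div_mul_of_mul_sub_two_mul_le (Nat.cast_pos.2 hT) (mul_nonneg hD hM)
    (hpath.trans (add_le_add le_rfl (not_lt.1 hle))) using 3
  ring

/-- **High-probability bound for projected stochastic gradient ascent (PGA).**
With step size `η_t = 2/√t`, diameter bound `D`, gradient norm bound `L`,
noise bound `M`, and the DR-submodularity consequence
`F(y) - 2F(x) ≤ ⟨∇F(x), y - x⟩` on `C`, for any `δ ∈ (0,1]`, with probability
at least `1 - δ`, `(1/T)·Σ_{t=1}^T F(x_t) ≥ OPT/2 - C̃/√T - D·M·√(log(1/δ)/(2T))`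
where `C̃ = (8(L+M)² + D²)/8`. -/
theorem pga_high_prob_bound
    {n : ℕ} {Ω : Type*} {mΩ : MeasurableSpace Ω}
    (μ : Measure Ω) [IsProbabilityMeasure μ]
    (ℱ : Filtration ℕ mΩ)
    (C : Set (EuclideanSpace ℝ (Fin n)))
    (hCne : C.Nonempty) (hCconv : Convex ℝ C) (hCcomp : IsCompact C)
    (F : EuclideanSpace ℝ (Fin n) → ℝ)
    (gradF : EuclideanSpace ℝ (Fin n) → EuclideanSpace ℝ (Fin n))
    (hgrad : ∀ y, HasGradientAt F (gradF y) y)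
    (D L M : ℝ)
    (hdiam : ∀ x ∈ C, ∀ y ∈ C, ‖x - y‖ ≤ D)
    (hsmooth : ∀ x y, ‖gradF x - gradF y‖ ≤ L * ‖x - y‖)
    (hgradBound : ∀ x ∈ C, ‖gradF x‖ ≤ L)
    (hDR : ∀ x ∈ C, ∀ y ∈ C, F y - 2 * F x ≤ (inner ℝ (gradF x) (y - x) : ℝ))
    (projC : EuclideanSpace ℝ (Fin n) → EuclideanSpace ℝ (Fin n))
    (hprojMem : ∀ y, projC y ∈ C)
    (hprojDist : ∀ y, ∀ c ∈ C, ‖projC y - c‖ ≤ ‖y - c‖)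
    (T : ℕ) (hT : 1 ≤ T)
    (x g : ℕ → Ω → EuclideanSpace ℝ (Fin n))
    (hxC : ∀ t ω, x t ω ∈ C)
    (hxAdapted : ∀ t, 1 ≤ t → StronglyMeasurable[ℱ (t - 1)] (x t))
    (hgAdapted : ∀ t, 1 ≤ t → StronglyMeasurable[ℱ t] (g t))
    (hupdate : ∀ t, 1 ≤ t → ∀ ω,
      x (t + 1) ω = projC (x t ω + (2 / Real.sqrt (t : ℝ)) • g t ω))
    (hcond : ∀ t, 1 ≤ t → μ[g t | ℱ (t - 1)] =ᵐ[μ] fun ω => gradF (x t ω))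
    (hnoise : ∀ t, 1 ≤ t → ∀ᵐ ω ∂μ, ‖g t ω - gradF (x t ω)‖ ≤ M)
    (OPT : ℝ) (hOPT : IsGreatest (F '' C) OPT)
    (δ : ℝ) (hδ : δ ∈ Set.Ioc (0 : ℝ) 1) :
    μ {ω | (1 / (T : ℝ)) * ∑ t ∈ Finset.Icc 1 T, F (x t ω) ≥
        (1 / 2) * OPT - ((8 * (L + M) ^ 2 + D ^ 2) / 8) / Real.sqrt (T : ℝ)
          - D * M * Real.sqrt (Real.log (1 / δ) / (2 * (T : ℝ)))} ≥
      ENNReal.ofReal (1 - δ) :=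
  pga_high_prob_bound_general μ ℱ C F gradF D L M hdiam hsmooth hgradBound hDR projC hprojDist T hT
    x g hxC hxAdapted hgAdapted hupdate hcond hnoise OPT hOPT δ hδ
end

section
/- For every α ∈ (0,1) (exclusive), the series Σ_{t=1}^∞ (1 − 1/t^α)^t converges and satisfies Σ_{t=1}^∞ (1 − 1/t^α)^t ≤ (1/(1−α))·Γ(1/(1−α)), where Γ(z) = ∫₀^∞ u^{z−1}e^{−u} du is the Gamma function. -/
open Real MeasureTheory Set Finset

/-- For every `α ∈ (0,1)`, the series `Σ_{t=1}^∞ (1 - 1/t^α)^t` converges and is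
bounded by `(1/(1-α))·Γ(1/(1-α))`. (The sum is indexed by `t = k + 1 ≥ 1`.) -/
theorem series_one_sub_inv_rpow_le_gamma (α : ℝ) (hα : α ∈ Set.Ioo (0 : ℝ) 1) :
    Summable (fun k : ℕ => (1 - 1 / ((k : ℝ) + 1) ^ α) ^ (k + 1)) ∧
    ∑' k : ℕ, (1 - 1 / ((k : ℝ) + 1) ^ α) ^ (k + 1) ≤
      (1 / (1 - α)) * Real.Gamma (1 / (1 - α)) := by
  obtain ⟨hα0, hα1⟩ := hα
  set β : ℝ := 1 - α with hβ
  have hβ0 : 0 < β := by simp only [hβ]; linarith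
  set f : ℝ → ℝ := fun x => Real.exp (-x ^ β) with hf
  set g : ℕ → ℝ := fun k => (1 - 1 / ((k : ℝ) + 1) ^ α) ^ (k + 1) with hg
  -- basic facts about each term
  have ht : ∀ k : ℕ, (1 : ℝ) ≤ ((k : ℝ) + 1) ^ α := fun k =>
    Real.one_le_rpow (le_add_of_nonneg_left (Nat.cast_nonneg k)) hα0.le
  have htpos : ∀ k : ℕ, (0 : ℝ) < ((k : ℝ) + 1) ^ α := fun k =>
    lt_of_lt_of_le one_pos (ht k)
  have hg_nonneg : ∀ k, 0 ≤ g k := by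
    intro k
    apply pow_nonneg
    have : 1 / ((k : ℝ) + 1) ^ α ≤ 1 := by
      rw [div_le_one (htpos k)]; exact ht k
    linarith
  -- each term is at most f (k+1)
  have hterm : ∀ k : ℕ, g k ≤ f ((k : ℝ) + 1) := by
    intro k
    have hx : (0 : ℝ) < 1 / ((k : ℝ) + 1) ^ α := by positivity
    have h1 : 1 - 1 / ((k : ℝ) + 1) ^ α ≤ Real.exp (-(1 / ((k : ℝ) + 1) ^ α)) := by
      have := Real.add_one_le_exp (-(1 / ((k : ℝ) + 1) ^ α))
      linarith
    have h0 : 0 ≤ 1 - 1 / ((k : ℝ) + 1) ^ α := by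
      have : 1 / ((k : ℝ) + 1) ^ α ≤ 1 := by
        rw [div_le_one (htpos k)]; exact ht k
      linarith
    have h2 : g k ≤ Real.exp (-(1 / ((k : ℝ) + 1) ^ α)) ^ (k + 1) :=
      pow_le_pow_left₀ h0 h1 _
    refine h2.trans_eq ?_
    rw [← Real.exp_nat_mul]
    congr 1
    have hk1 : (0 : ℝ) < (k : ℝ) + 1 := by positivity
    have : ((k : ℝ) + 1) ^ β = ((k : ℝ) + 1) ^ (1 : ℝ) / ((k : ℝ) + 1) ^ α := by
      rw [hβ, Real.rpow_sub hk1]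
    rw [this, Real.rpow_one]
    push_cast
    field_simp
  -- integrability of f on (0, ∞)
  have hint : IntegrableOn f (Ioi 0) := by
    rw [← integrableOn_Ioi_comp_rpow_iff f (one_div_ne_zero hβ0.ne')]
    have hGam : IntegrableOn
        (fun x : ℝ => |1 / β| * (Real.exp (-x) * x ^ (1 / β - 1))) (Ioi 0) :=
      (Real.GammaIntegral_convergent (by positivity : (0:ℝ) < 1 / β)).const_mul _
    refine hGam.congr_fun (fun x hx => ?_) measurableSet_Ioi
    have hx0 : (0 : ℝ) < x := hx
    have : (x ^ (1 / β)) ^ β = x := by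
      rw [← Real.rpow_mul hx0.le, one_div_mul_cancel hβ0.ne', Real.rpow_one]
    simp only [hf, smul_eq_mul, this]
    ring
  -- f is nonnegative
  have hf_nonneg : ∀ x, 0 ≤ f x := fun x => (Real.exp_pos _).le
  -- partial sums are bounded by the integral over (0, ∞)
  have hbound : ∀ n : ℕ, ∑ k ∈ Finset.range n, g k ≤ ∫ x in Ioi (0:ℝ), f x := by
    intro n
    have hanti : AntitoneOn f (Icc (0:ℝ) (0 + n)) := by
      intro x hx y hy hxy
      simp only [hf]
      apply Real.exp_le_exp.2
      apply neg_le_neg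
      exact Real.rpow_le_rpow hx.1 hxy hβ0.le
    have hsum := hanti.sum_le_integral
    have step1 : ∑ k ∈ Finset.range n, g k ≤
        ∑ i ∈ Finset.range n, f (0 + ((i : ℝ) + 1)) := by
      apply Finset.sum_le_sum
      intro i _
      simpa using hterm i
    have step2 : ∑ i ∈ Finset.range n, f (0 + (((i : ℕ) + 1 : ℕ) : ℝ)) ≤
        ∫ x in (0:ℝ)..(0 + n), f x := hsum
    have step2' : ∑ i ∈ Finset.range n, f (0 + ((i : ℝ) + 1)) ≤
        ∫ x in (0:ℝ)..(0 + n), f x := by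
      convert step2 using 2 with i
      push_cast
      ring
    have step3 : ∫ x in (0:ℝ)..(0 + n), f x ≤ ∫ x in Ioi (0:ℝ), f x := by
      rw [zero_add, intervalIntegral.integral_of_le (by positivity : (0:ℝ) ≤ n)]
      apply setIntegral_mono_set hint
      · exact Filter.Eventually.of_forall hf_nonneg
      · exact HasSubset.Subset.eventuallyLE Ioc_subset_Ioi_self
    calc ∑ k ∈ Finset.range n, g k ≤ _ := step1
      _ ≤ _ := step2'
      _ ≤ _ := step3
  -- the value of the integral
  have hval : ∫ x in Ioi (0:ℝ), f x = (1 / β) * Real.Gamma (1 / β) := by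
    rw [hf]
    rw [integral_exp_neg_rpow hβ0, Real.Gamma_add_one (one_div_ne_zero hβ0.ne')]
  have hbound' : ∀ n : ℕ, ∑ k ∈ Finset.range n, g k ≤ (1 / β) * Real.Gamma (1 / β) := by
    intro n; rw [← hval]; exact hbound n
  refine ⟨summable_of_sum_range_le hg_nonneg hbound', ?_⟩
  exact tsum_le_of_sum_range_le hg_nonneg hbound'
end

section
/- (Deterministic per-step inequality for projected gradient ascent.) Let C ⊆ ℝ^n be a nonempty closed convex set, x, x* ∈ C, g ∈ ℝ^n with ‖g‖ ≤ G, η > 0, and let x⁺ = P_C(x + η·g) be the Euclidean projection of x + η·g onto C. Suppose F : ℝ^n → ℝ is differentiable and satisfies F(x*) − 2F(x) ≤ ⟨∇F(x), x* − x⟩. Then: F(x*) − 2F(x) ≤ (η/2)·G² + (1/(2η))·(‖x − x*‖² − ‖x⁺ − x*‖²) + ⟨x − x*, g − ∇F(x)⟩. -/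
/-!
Since `x⁺` is at least as close to `x*` as `x + η g` is,
`‖x⁺ - x*‖² ≤ ‖x - x*‖² + 2η⟪x - x*, g⟫ + η²‖g‖²`, which bounds `-⟪x - x*, g⟫` by
`(η/2)‖g‖² + (‖x - x*‖² - ‖x⁺ - x*‖²)/(2η)`. Adding `⟪x - x*, g - ∇F(x)⟫` to `-⟪x - x*, g⟫`
gives `⟪∇F(x), x* - x⟫`, which dominates `F(x*) - 2F(x)`.
-/

section ProjectedStep

variable {E : Type*} [NormedAddCommGroup E] [InnerProductSpace ℝ E]

theorem norm_add_smul_sub_sq (x c g : E) (η : ℝ) :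
    ‖x + η • g - c‖ ^ 2 = ‖x - c‖ ^ 2 + 2 * η * inner ℝ (x - c) g + η ^ 2 * ‖g‖ ^ 2 := by
  rw [show x + η • g - c = (x - c) + η • g by abel, norm_add_sq_real, real_inner_smul_right,
    norm_smul, Real.norm_eq_abs, mul_pow, sq_abs]
  ring

theorem neg_inner_le_of_norm_sub_le_norm_add_smul_sub {p x c g : E} {η : ℝ} (hη : 0 < η)
    (hstep : ‖p - c‖ ≤ ‖x + η • g - c‖) :
    -inner ℝ (x - c) g ≤ η / 2 * ‖g‖ ^ 2 + 1 / (2 * η) * (‖x - c‖ ^ 2 - ‖p - c‖ ^ 2) := by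
  have hsq : ‖p - c‖ ^ 2 ≤ ‖x + η • g - c‖ ^ 2 := pow_le_pow_left₀ (norm_nonneg _) hstep 2
  rw [norm_add_smul_sub_sq] at hsq
  have hsplit : η / 2 * ‖g‖ ^ 2 + 1 / (2 * η) * (‖x - c‖ ^ 2 - ‖p - c‖ ^ 2)
      = (‖x - c‖ ^ 2 + η ^ 2 * ‖g‖ ^ 2 - ‖p - c‖ ^ 2) / (2 * η) := by
    field_simp
    ring
  rw [hsplit, le_div_iff₀ (by positivity)]
  linarith

end ProjectedStep

theorem pga_per_step_inequality_general
    {n : ℕ} (C : Set (EuclideanSpace ℝ (Fin n)))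
    (x xstar : EuclideanSpace ℝ (Fin n)) (hxstar : xstar ∈ C)
    (g : EuclideanSpace ℝ (Fin n)) (G : ℝ) (hg : ‖g‖ ≤ G)
    (η : ℝ) (hη : 0 < η)
    (xplus : EuclideanSpace ℝ (Fin n))
    (hxplusProj : ∀ c ∈ C, ‖xplus - c‖ ≤ ‖(x + η • g) - c‖)
    (F : EuclideanSpace ℝ (Fin n) → ℝ)
    (gradFx : EuclideanSpace ℝ (Fin n))
    (hDR : F xstar - 2 * F x ≤ (inner ℝ gradFx (xstar - x) : ℝ)) :
    F xstar - 2 * F x ≤ (η / 2) * G ^ 2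
      + (1 / (2 * η)) * (‖x - xstar‖ ^ 2 - ‖xplus - xstar‖ ^ 2)
      + (inner ℝ (x - xstar) (g - gradFx) : ℝ) := by
  have hstep := neg_inner_le_of_norm_sub_le_norm_add_smul_sub hη (hxplusProj xstar hxstar)
  have hG : η / 2 * ‖g‖ ^ 2 ≤ η / 2 * G ^ 2 := by gcongr
  calc F xstar - 2 * F x ≤ inner ℝ gradFx (xstar - x) := hDR
    _ = -inner ℝ (x - xstar) g + inner ℝ (x - xstar) (g - gradFx) := by
      simp only [inner_sub_left, inner_sub_right, real_inner_comm gradFx]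
      ring
    _ ≤ _ := by linarith

/-- **Deterministic per-step inequality for projected gradient ascent.**
With `x⁺` the Euclidean projection of `x + η·g` onto the closed convex set `C`
(characterized by `x⁺ ∈ C` and `‖x⁺ - c‖ ≤ ‖(x + η·g) - c‖` for all `c ∈ C`),
`‖g‖ ≤ G`, and `F(x*) - 2F(x) ≤ ⟨∇F(x), x* - x⟩`:
`F(x*) - 2F(x) ≤ (η/2)G² + (1/(2η))(‖x - x*‖² - ‖x⁺ - x*‖²) + ⟨x - x*, g - ∇F(x)⟩`. -/
theorem pga_per_step_inequality
    {n : ℕ} (C : Set (EuclideanSpace ℝ (Fin n)))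
    (hCne : C.Nonempty) (hCclosed : IsClosed C) (hCconv : Convex ℝ C)
    (x xstar : EuclideanSpace ℝ (Fin n)) (hx : x ∈ C) (hxstar : xstar ∈ C)
    (g : EuclideanSpace ℝ (Fin n)) (G : ℝ) (hg : ‖g‖ ≤ G)
    (η : ℝ) (hη : 0 < η)
    (xplus : EuclideanSpace ℝ (Fin n)) (hxplusMem : xplus ∈ C)
    (hxplusProj : ∀ c ∈ C, ‖xplus - c‖ ≤ ‖(x + η • g) - c‖)
    (F : EuclideanSpace ℝ (Fin n) → ℝ)
    (gradFx : EuclideanSpace ℝ (Fin n))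
    (hgrad : HasGradientAt F gradFx x)
    (hDR : F xstar - 2 * F x ≤ (inner ℝ gradFx (xstar - x) : ℝ)) :
    F xstar - 2 * F x ≤ (η / 2) * G ^ 2
      + (1 / (2 * η)) * (‖x - xstar‖ ^ 2 - ‖xplus - xstar‖ ^ 2)
      + (inner ℝ (x - xstar) (g - gradFx) : ℝ) :=
  pga_per_step_inequality_general C x xstar hxstar g G hg η hη xplus hxplusProj F gradFx hDR
end
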